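/- The q-Fibonacci polynomials satisfy F_{m+2}(s,q) - F_{m+1}(s,q) = q^{m-1} s F_m(s,q) for all m ≥ 0, and more generally ∑_{k=0}^n (-1)^k q^{C(k,2)} [n choose k]_q F_{2n+m-k}(s,q) = q^{2C(n,2)+(m-1)n} s^n F_m(s,q) for all n ≥ 0 and m ≥ 0. -/

import Mathlib

noncomputable section

/-- The field ℚ(q) of rational functions, with q an indeterminate. -/
abbrev K : Type := RatFunc ℚ

/-- The indeterminate q. -/
def q : K := RatFunc.X

/-- The q-integer [n]_q. -/
def qint (n : ℕ) : K := ∑ i ∈ Finset.range n, q ^ i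

/-- The q-factorial. -/
def qfact : ℕ → K
  | 0 => 1
  | n + 1 => qint (n + 1) * qfact n

/-- The Gaussian binomial coefficient. -/
def qbinom (n k : ℕ) : K := qfact n / (qfact k * qfact (n - k))

/-- The (Carlitz) q-Fibonacci polynomials: F_0 = 0, F_1 = 1,
F_n(s,q) = F_{n-1}(s,q) + q^{n-3} s F_{n-2}(s,q). -/
def qFib : ℕ → Polynomial K
  | 0 => 0
  | 1 => 1
  | n + 2 => qFib (n + 1) + Polynomial.C (q ^ ((n : ℤ) - 1)) * Polynomial.X * qFib n

/-- The q-Fibonacci polynomials with q replaced by 1/q. -/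
def qFibInv : ℕ → Polynomial K
  | 0 => 0
  | 1 => 1
  | n + 2 => qFibInv (n + 1) + Polynomial.C (q ^ (1 - (n : ℤ))) * Polynomial.X * qFibInv n

lemma q_ne_zero : q ≠ 0 := RatFunc.X_ne_zero

lemma qint_ne_zero {n : ℕ} (hn : n ≠ 0) : qint n ≠ 0 := by
  have h : qint n = algebraMap (Polynomial ℚ) K (∑ i ∈ Finset.range n, Polynomial.X ^ i) := by
    simp [qint, q, RatFunc.algebraMap_X]
  rw [h, map_ne_zero_iff _ (RatFunc.algebraMap_injective ℚ)]
  intro h0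
  simpa [Polynomial.eval_finsetSum, hn] using congrArg (Polynomial.eval 0) h0

lemma qfact_ne_zero : ∀ n, qfact n ≠ 0
  | 0 => one_ne_zero
  | n + 1 => mul_ne_zero (qint_ne_zero n.succ_ne_zero) (qfact_ne_zero n)

lemma qint_add (a b : ℕ) : qint (a + b) = qint a + q ^ a * qint b := by
  simp only [qint, Finset.sum_range_add, Finset.mul_sum, pow_add]

lemma qbinom_zero_right (n : ℕ) : qbinom n 0 = 1 := by
  simpa [qbinom, qfact] using qfact_ne_zero n

lemma qbinom_self (n : ℕ) : qbinom n n = 1 := by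
  simpa [qbinom, qfact] using qfact_ne_zero n

lemma qbinom_succ_succ {n k : ℕ} (hk : k < n) :
    qbinom (n + 1) (k + 1) = qbinom n (k + 1) + q ^ (n - k) * qbinom n k := by
  obtain ⟨d, rfl⟩ := Nat.exists_eq_add_of_lt hk
  have hint : qint (k + d + 1 + 1) = qint (d + 1) + q ^ (d + 1) * qint (k + 1) := by
    rw [← qint_add]; ring_nf
  simp only [qbinom, qfact, hint, show k + d + 1 - k = d + 1 by omega,
    show k + d + 1 + 1 - (k + 1) = d + 1 by omega, show k + d + 1 - (k + 1) = d by omega]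
  have := qfact_ne_zero (k + d + 1)
  have := qfact_ne_zero k
  have := qfact_ne_zero d
  have := qint_ne_zero k.succ_ne_zero
  have := qint_ne_zero d.succ_ne_zero
  field_simp

lemma choose_two_succ (n : ℕ) : (n + 1).choose 2 = n.choose 2 + n := by
  rw [Nat.choose_succ_succ', Nat.choose_one_right, add_comm]

lemma qFib_succ_succ (m : ℕ) :
    qFib (m + 2) = qFib (m + 1) + Polynomial.C (q ^ ((m : ℤ) - 1)) * Polynomial.X * qFib m := rfl

/-- The coefficients of `∏_{i < n} (E - q ^ i) = ∑_k qDiffCoeff n k • E ^ (n - k)`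
(q-binomial theorem). -/
def qDiffCoeff (n k : ℕ) : K := (-1) ^ k * q ^ k.choose 2 * qbinom n k

lemma qDiffCoeff_succ_zero (n : ℕ) : qDiffCoeff (n + 1) 0 = qDiffCoeff n 0 := by
  simp [qDiffCoeff, qbinom_zero_right]

lemma qDiffCoeff_succ_self (n : ℕ) :
    qDiffCoeff (n + 1) (n + 1) = -(q ^ n * qDiffCoeff n n) := by
  simp only [qDiffCoeff, qbinom_self, choose_two_succ, pow_add]
  ring

lemma qDiffCoeff_succ_succ {n j : ℕ} (hj : j < n) :
    qDiffCoeff (n + 1) (j + 1) = qDiffCoeff n (j + 1) - q ^ n * qDiffCoeff n j := by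
  obtain ⟨d, rfl⟩ := Nat.exists_eq_add_of_le hj.le
  simp only [qDiffCoeff, qbinom_succ_succ hj, choose_two_succ, Nat.add_sub_cancel_left, pow_add]
  ring

section qDiff

variable {M : Type*} [AddCommGroup M] [Module K M]

/-- `qDiff n f m` is `(∏_{i < n} (E - q ^ i)) f` at index `n + m`, where `E` is the shift
`f ↦ f (· + 1)`. -/
def qDiff (n : ℕ) (f : ℕ → M) (m : ℕ) : M :=
  ∑ k ∈ Finset.range (n + 1), qDiffCoeff n k • f (2 * n + m - k)

lemma qDiff_zero (f : ℕ → M) (m : ℕ) : qDiff 0 f m = f m := by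
  simp [qDiff, qDiffCoeff, qbinom_zero_right]

lemma qDiff_succ (n : ℕ) (f : ℕ → M) (m : ℕ) :
    qDiff (n + 1) f m = qDiff n f (m + 2) - q ^ n • qDiff n f (m + 1) := by
  have hmid : ∀ j ∈ Finset.range n,
      qDiffCoeff (n + 1) (j + 1) • f (2 * (n + 1) + m - (j + 1)) =
        qDiffCoeff n (j + 1) • f (2 * n + (m + 2) - (j + 1)) -
          q ^ n • qDiffCoeff n j • f (2 * n + (m + 1) - j) := by
    intro j hj
    rw [qDiffCoeff_succ_succ (Finset.mem_range.mp hj), sub_smul, mul_smul,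
      show 2 * n + (m + 2) - (j + 1) = 2 * (n + 1) + m - (j + 1) by omega,
      show 2 * n + (m + 1) - j = 2 * (n + 1) + m - (j + 1) by omega]
  simp only [qDiff]
  rw [Finset.sum_range_succ', Finset.sum_range_succ, Finset.sum_congr rfl hmid,
    Finset.sum_sub_distrib, Finset.sum_range_succ' _ n, Finset.sum_range_succ _ n,
    ← Finset.smul_sum, smul_add, qDiffCoeff_succ_zero, qDiffCoeff_succ_self, neg_smul, mul_smul,
    show 2 * (n + 1) + m - (n + 1) = 2 * n + (m + 1) - n by omega,
    show 2 * (n + 1) + m - 0 = 2 * n + (m + 2) - 0 by omega]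
  abel

end qDiff

/-- Since `F (m + 2) - F (m + 1) = q ^ (m - 1) s F m`, each factor `E - q ^ i` of `qDiff` lowers
the index by one and contributes a factor `q ^ (…) s`. -/
lemma qDiff_qFib (n m : ℕ) :
    qDiff n qFib m =
      q ^ (2 * (n.choose 2 : ℤ) + ((m : ℤ) - 1) * n) • (Polynomial.X ^ n * qFib m) := by
  induction n generalizing m with
  | zero => simp [qDiff_zero]
  | succ n ih =>
    have hshift : q ^ n * q ^ (2 * (n.choose 2 : ℤ) + (((m + 1 : ℕ) : ℤ) - 1) * n) =
        q ^ (2 * (n.choose 2 : ℤ) + (((m + 2 : ℕ) : ℤ) - 1) * n) := by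
      rw [← zpow_natCast, ← zpow_add₀ q_ne_zero]; push_cast; ring_nf
    have hstep :
        q ^ (2 * (n.choose 2 : ℤ) + (((m + 2 : ℕ) : ℤ) - 1) * n) * q ^ ((m : ℤ) - 1) =
          q ^ (2 * ((n + 1).choose 2 : ℤ) + ((m : ℤ) - 1) * (n + 1 : ℕ)) := by
      rw [← zpow_add₀ q_ne_zero, choose_two_succ]; push_cast; ring_nf
    rw [qDiff_succ, ih, ih, ← mul_smul, hshift, ← smul_sub, ← mul_sub, qFib_succ_succ,
      add_sub_cancel_left, ← hstep, mul_smul]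
    simp only [← Polynomial.C_mul', pow_succ]
    ring

theorem stmt15 :
    (∀ m : ℕ, qFib (m + 2) - qFib (m + 1) =
      Polynomial.C (q ^ ((m : ℤ) - 1)) * Polynomial.X * qFib m) ∧
    (∀ n m : ℕ,
      ∑ k ∈ Finset.range (n + 1),
        Polynomial.C ((-1 : K) ^ k * q ^ (k.choose 2) * qbinom n k) *
          qFib (2 * n + m - k) =
      Polynomial.C (q ^ (2 * (n.choose 2 : ℤ) + ((m : ℤ) - 1) * n)) *
        (Polynomial.X ^ n * qFib m)) := by
  refine ⟨fun m => by rw [qFib_succ_succ, add_sub_cancel_left], fun n m => ?_⟩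
  simpa only [qDiff, qDiffCoeff, Polynomial.C_mul'] using qDiff_qFib n m

end
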